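/- Let n, k be positive integers and let n_1, ..., n_k be positive reals summing to n. With f(x) = (x^3 + 3x^2 + 2x + 2)/2, the product ∏_{i=1}^k f(n_i) is at most f(n/k)^k. -/

import Mathlib

/-!
`log f` is concave on `[1, ∞)`: with `f' = (3x² + 6x + 2)/2` and `f'' = 3x + 3`, the condition
`f f'' ≤ f'²` reduces to `3x⁴ + 12x³ + 18x² - 8 ≥ 0`. Jensen's inequality for `log f` with equal
weights `1/k` then bounds `∑ log f(nᵢ)` by `k log f(n/k)`; exponentiate.
-/

noncomputable def f (x : ℝ) : ℝ := (x ^ 3 + 3 * x ^ 2 + 2 * x + 2) / 2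

open Finset Real Set

lemma concaveOn_log_comp_of_hasDerivAt {D : Set ℝ} (hD : Convex ℝ D) {g g' g'' : ℝ → ℝ}
    (hg : ContinuousOn g D) (hg₀ : ∀ x ∈ D, 0 < g x)
    (hg' : ∀ x ∈ interior D, HasDerivAt g (g' x) x)
    (hg'' : ∀ x ∈ interior D, HasDerivAt g' (g'' x) x)
    (hlc : ∀ x ∈ interior D, g x * g'' x ≤ g' x ^ 2) :
    ConcaveOn ℝ D (log ∘ g) := by
  have hne : ∀ x ∈ interior D, g x ≠ 0 := fun x hx ↦ (hg₀ x (interior_subset hx)).ne'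
  refine concaveOn_of_hasDerivWithinAt2_nonpos hD (hg.log fun x hx ↦ (hg₀ x hx).ne')
    (f' := fun x ↦ g' x / g x) (f'' := fun x ↦ (g'' x * g x - g' x * g' x) / g x ^ 2)
    (fun x hx ↦ ((hg' x hx).log (hne x hx)).hasDerivWithinAt)
    (fun x hx ↦ ((hg'' x hx).div (hg' x hx) (hne x hx)).hasDerivWithinAt) fun x hx ↦ ?_
  exact div_nonpos_of_nonpos_of_nonneg (by nlinarith [hlc x hx]) (sq_nonneg _)

lemma prod_le_pow_average_of_concaveOn_log_comp {s : Set ℝ} {g : ℝ → ℝ}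
    (hg : ConcaveOn ℝ s (log ∘ g)) (hg₀ : ∀ x ∈ s, 0 < g x) {ι : Type*} (t : Finset ι)
    {a : ι → ℝ} (ha : ∀ i ∈ t, a i ∈ s) :
    ∏ i ∈ t, g (a i) ≤ g ((∑ i ∈ t, a i) / #t) ^ #t := by
  rcases t.eq_empty_or_nonempty with rfl | ht
  · simp
  have hcard : (0 : ℝ) < #t := by exact_mod_cast ht.card_pos
  have hw : ∑ _i ∈ t, (#t : ℝ)⁻¹ = 1 := by simp [hcard.ne']
  have hmean : ∑ i ∈ t, (#t : ℝ)⁻¹ • a i = (∑ i ∈ t, a i) / #t := by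
    rw [← smul_sum, smul_eq_mul, inv_mul_eq_div]
  have hmem : (∑ i ∈ t, a i) / #t ∈ s := hmean ▸ hg.1.sum_mem (fun _ _ ↦ by positivity) hw ha
  have jensen := hg.le_map_sum (fun _ _ ↦ by positivity) hw ha
  rw [hmean, ← smul_sum, smul_eq_mul, inv_mul_le_iff₀ hcard] at jensen
  rw [← log_le_log_iff (prod_pos fun i hi ↦ hg₀ _ (ha i hi)) (pow_pos (hg₀ _ hmem) _),
    log_prod fun i hi ↦ (hg₀ _ (ha i hi)).ne', log_pow]
  exact jensen

lemma f_pos {x : ℝ} (hx : 0 ≤ x) : 0 < f x := by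
  unfold f
  positivity

lemma hasDerivAt_f (x : ℝ) : HasDerivAt f ((3 * x ^ 2 + 6 * x + 2) / 2) x :=
  (((((hasDerivAt_pow 3 x).fun_add ((hasDerivAt_pow 2 x).const_mul 3)).fun_add
    ((hasDerivAt_id' x).const_mul 2)).add_const 2).div_const 2).congr_deriv (by norm_num; ring)

lemma f_mul_le_sq {x : ℝ} (hx : 1 ≤ x) :
    f x * (3 * x + 3) ≤ ((3 * x ^ 2 + 6 * x + 2) / 2) ^ 2 := by
  unfold f
  nlinarith [pow_le_pow_left₀ zero_le_one hx 4, pow_le_pow_left₀ zero_le_one hx 3,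
    pow_le_pow_left₀ zero_le_one hx 2]

lemma concaveOn_log_f : ConcaveOn ℝ (Ici 1) (log ∘ f) := by
  have hderiv' (x : ℝ) : HasDerivAt (fun y ↦ (3 * y ^ 2 + 6 * y + 2) / 2) (3 * x + 3) x :=
    (((((hasDerivAt_pow 2 x).const_mul 3).fun_add
      ((hasDerivAt_id' x).const_mul 6)).add_const 2).div_const 2).congr_deriv (by norm_num; ring)
  exact concaveOn_log_comp_of_hasDerivAt (convex_Ici 1) (by unfold f; fun_prop)
    (fun x hx ↦ f_pos (zero_le_one.trans hx)) (fun x _ ↦ hasDerivAt_f x) (fun x _ ↦ hderiv' x)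
    fun x hx ↦ f_mul_le_sq (interior_subset hx)

theorem prod_f_le_f_avg_pow_general (n k : ℕ)
    (a : Fin k → ℝ) (ha : ∀ i, 1 ≤ a i) (hsum : ∑ i, a i = (n : ℝ)) :
    ∏ i, f (a i) ≤ f ((n : ℝ) / (k : ℝ)) ^ k := by
  have h := prod_le_pow_average_of_concaveOn_log_comp concaveOn_log_f
    (fun x hx ↦ f_pos (zero_le_one.trans hx)) univ (a := a) fun i _ ↦ ha i
  simpa [hsum] using h

/-- If `n₁, …, n_k ≥ 1` are reals summing to `n`, then `∏ f(nᵢ) ≤ f(n/k)^k`. -/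
theorem prod_f_le_f_avg_pow (n k : ℕ) (hn : 0 < n) (hk : 0 < k)
    (a : Fin k → ℝ) (ha : ∀ i, 1 ≤ a i) (hsum : ∑ i, a i = (n : ℝ)) :
    ∏ i, f (a i) ≤ f ((n : ℝ) / (k : ℝ)) ^ k :=
  prod_f_le_f_avg_pow_general n k a ha hsum
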